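/- arXiv:2409.08607 — 6 statements merged into one kernel-verified Lean document; each statement's English description precedes it below -/
import Mathlib

section
/- Let G = (V, E, (V_□, V_◯, V_△)) be a stochastic game and X ⊆ V. Let W be the greatest fixed point of the monotone set map Y ↦ X ∩ (Pre_□(Y) ∪ Pre(Y)), and let P = Edges_□(W, V∖W) = {(u,v) ∈ E : u ∈ W ∩ V_□, v ∉ W}. Then every play v : ℕ → V with v 0 ∈ W such that (v i, v (i+1)) ∉ P for all i satisfies v i ∈ X for all i. (Theorem 1 of the paper: the safety template (P, ∅, ∅) is winning for the safety objective □X.) -/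
/-- A stochastic game `G = (V, E, (V_□, V_◯, V_△))`: a directed graph on `V` in
which every vertex has at least one outgoing edge, together with a partition of
the vertices into Even (`VE = V_□`), Odd (`VO = V_◯`) and Random (`VR = V_△`). -/
structure SGame (V : Type*) where
  E : Set (V × V)
  VE : Set V
  VO : Set V
  VR : Set V
  serial : ∀ u : V, ∃ w, (u, w) ∈ E
  cover : VE ∪ VO ∪ VR = Set.univ
  dEO : Disjoint VE VO
  dER : Disjoint VE VR
  dOR : Disjoint VO VR

namespace SGame

variable {V : Type*}

/-- `Pre(Y) = {u ∈ V : ∀ w, (u,w) ∈ E → w ∈ Y}`. -/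
def Pre (G : SGame V) (Y : Set V) : Set V := {u | ∀ w, (u, w) ∈ G.E → w ∈ Y}

/-- `Pre_□(Y) = {u ∈ V_□ : ∃ w ∈ Y, (u,w) ∈ E}`. -/
def PreE (G : SGame V) (Y : Set V) : Set V := {u | u ∈ G.VE ∧ ∃ w ∈ Y, (u, w) ∈ G.E}

/-- `Pre_△(Z,Y) = {u ∈ V_△ : (∀ w, (u,w) ∈ E → w ∈ Z) ∧ (∃ w ∈ Y, (u,w) ∈ E)}`. -/
def PreR (G : SGame V) (Z Y : Set V) : Set V :=
  {u | u ∈ G.VR ∧ (∀ w, (u, w) ∈ G.E → w ∈ Z) ∧ ∃ w ∈ Y, (u, w) ∈ G.E}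

lemma Pre_mono (G : SGame V) : Monotone G.Pre :=
  fun _ _ h _ hu w hw => h (hu w hw)

lemma PreE_mono (G : SGame V) : Monotone G.PreE := by
  rintro Y Z h u ⟨h1, w, hw, he⟩
  exact ⟨h1, w, h hw, he⟩

lemma PreR_mono (G : SGame V) {Z Z' Y Y' : Set V} (hZ : Z ⊆ Z') (hY : Y ⊆ Y') :
    G.PreR Z Y ⊆ G.PreR Z' Y' := by
  rintro u ⟨h1, h2, w, hw, he⟩
  exact ⟨h1, fun w hw => hZ (h2 w hw), w, hY hw, he⟩

/-- The monotone map `Y ↦ X ∪ Pre(Y)`. -/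
def attrOp (G : SGame V) (X : Set V) : Set V →o Set V :=
  ⟨fun Y => X ∪ G.Pre Y, fun _ _ h => Set.union_subset_union_right X (G.Pre_mono h)⟩

/-- `Attr(X) = lfp (Y ↦ X ∪ Pre(Y))`. -/
def Attr (G : SGame V) (X : Set V) : Set V := OrderHom.lfp (G.attrOp X)

/-- The monotone map `Y ↦ X ∪ Pre(Y) ∪ Pre_□(Y)`. -/
def attrOpE (G : SGame V) (X : Set V) : Set V →o Set V :=
  ⟨fun Y => X ∪ G.Pre Y ∪ G.PreE Y, fun _ _ h =>
    Set.union_subset_union (Set.union_subset_union_right X (G.Pre_mono h)) (G.PreE_mono h)⟩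

/-- `Attr_□(X) = lfp (Y ↦ X ∪ Pre(Y) ∪ Pre_□(Y))`. -/
def AttrE (G : SGame V) (X : Set V) : Set V := OrderHom.lfp (G.attrOpE X)

/-- The monotone map `Y ↦ X ∪ Pre(Y) ∪ Pre_△(Z,Y)` (for a fixed `Z`). -/
def attrOp' (G : SGame V) (X Z : Set V) : Set V →o Set V :=
  ⟨fun Y => X ∪ G.Pre Y ∪ G.PreR Z Y, fun _ _ h =>
    Set.union_subset_union (Set.union_subset_union_right X (G.Pre_mono h))
      (G.PreR_mono le_rfl h)⟩

/-- The monotone map `Z ↦ lfp (Y ↦ X ∪ Pre(Y) ∪ Pre_△(Z,Y))`. -/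
def attrOuter' (G : SGame V) (X : Set V) : Set V →o Set V :=
  ⟨fun Z => OrderHom.lfp (G.attrOp' X Z), by
    intro Z Z' h
    exact OrderHom.lfp.monotone fun Y =>
      Set.union_subset_union_right _ (G.PreR_mono h le_rfl)⟩

/-- `Attr'(X) = gfp (Z ↦ lfp (Y ↦ X ∪ Pre(Y) ∪ Pre_△(Z,Y)))`. -/
def Attr' (G : SGame V) (X : Set V) : Set V := OrderHom.gfp (G.attrOuter' X)

/-- The monotone map `Y ↦ X ∪ Pre_□(Y) ∪ Pre(Y) ∪ Pre_△(Z,Y)` (for a fixed `Z`). -/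
def attrOpE' (G : SGame V) (X Z : Set V) : Set V →o Set V :=
  ⟨fun Y => X ∪ G.PreE Y ∪ G.Pre Y ∪ G.PreR Z Y, fun _ _ h =>
    Set.union_subset_union
      (Set.union_subset_union (Set.union_subset_union_right X (G.PreE_mono h)) (G.Pre_mono h))
      (G.PreR_mono le_rfl h)⟩

/-- The monotone map `Z ↦ lfp (Y ↦ X ∪ Pre_□(Y) ∪ Pre(Y) ∪ Pre_△(Z,Y))`. -/
def attrOuterE' (G : SGame V) (X : Set V) : Set V →o Set V :=
  ⟨fun Z => OrderHom.lfp (G.attrOpE' X Z), by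
    intro Z Z' h
    exact OrderHom.lfp.monotone fun Y =>
      Set.union_subset_union_right _ (G.PreR_mono h le_rfl)⟩

/-- `Attr'_□(X) = gfp (Z ↦ lfp (Y ↦ X ∪ Pre_□(Y) ∪ Pre(Y) ∪ Pre_△(Z,Y)))`. -/
def AttrE' (G : SGame V) (X : Set V) : Set V := OrderHom.gfp (G.attrOuterE' X)

/-- `Edges_□(X,Y) = {(u,w) ∈ E : u ∈ X ∩ V_□ ∧ w ∈ Y}`. -/
def EdgesE (G : SGame V) (X Y : Set V) : Set (V × V) :=
  {e | e ∈ G.E ∧ e.1 ∈ X ∧ e.1 ∈ G.VE ∧ e.2 ∈ Y}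

/-- A play: an infinite sequence of vertices following the edges of the game. -/
def IsPlay (G : SGame V) (v : ℕ → V) : Prop := ∀ i, (v i, v (i + 1)) ∈ G.E

/-- A play is Random-fair if from every Random vertex occurring infinitely
often, every outgoing edge is taken infinitely often. -/
def RandomFair (G : SGame V) (v : ℕ → V) : Prop :=
  ∀ u ∈ G.VR, {i | v i = u}.Infinite →
    ∀ u', (u, u') ∈ G.E → {i | (v i, v (i + 1)) = (u, u')}.Infinite

/-- The monotone map `Y ↦ X ∩ (Pre_□(Y) ∪ Pre(Y))` of the safety algorithm. -/
def safetyOp (G : SGame V) (X : Set V) : Set V →o Set V :=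
  ⟨fun Y => X ∩ (G.PreE Y ∪ G.Pre Y), fun _ _ h =>
    Set.inter_subset_inter (le_refl X)
      (Set.union_subset_union (G.PreE_mono h) (G.Pre_mono h))⟩

/-- The winning set for the safety objective `□X`:
the greatest fixed point of `Y ↦ X ∩ (Pre_□(Y) ∪ Pre(Y))`. -/
def SafeW (G : SGame V) (X : Set V) : Set V := OrderHom.gfp (G.safetyOp X)

end SGame

namespace SGame

variable {V : Type*} (G : SGame V)

lemma safeW_subset (X : Set V) : G.SafeW X ⊆ X :=
  fun _ hu => ((OrderHom.map_gfp (G.safetyOp X)).symm.le hu).1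

lemma safeW_subset_preE_union_pre (X : Set V) :
    G.SafeW X ⊆ G.PreE (G.SafeW X) ∪ G.Pre (G.SafeW X) :=
  fun _ hu => ((OrderHom.map_gfp (G.safetyOp X)).symm.le hu).2

/- Only an Even vertex of `W` can have a successor outside `W`, and the edges to such successors
are exactly those of `Edges_□(W, Wᶜ)`. -/
lemma mem_of_not_mem_edgesE {W : Set V} {u w : V} (hu : u ∈ W)
    (hpre : u ∈ G.PreE W ∪ G.Pre W) (he : (u, w) ∈ G.E) (hnot : (u, w) ∉ G.EdgesE W Wᶜ) :
    w ∈ W := by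
  rcases hpre with hE | hA
  · by_contra hw
    exact hnot ⟨he, hu, hE.1, hw⟩
  · exact hA w he

lemma play_mem_of_forall_not_mem_edgesE {W : Set V} (hW : W ⊆ G.PreE W ∪ G.Pre W)
    {v : ℕ → V} (hplay : G.IsPlay v) (hv0 : v 0 ∈ W)
    (hv : ∀ i, (v i, v (i + 1)) ∉ G.EdgesE W Wᶜ) : ∀ i, v i ∈ W
  | 0 => hv0
  | i + 1 =>
    have hi := play_mem_of_forall_not_mem_edgesE hW hplay hv0 hv i
    G.mem_of_not_mem_edgesE hi (hW hi) (hplay i) (hv i)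

end SGame

theorem safety_template_winning_general {V : Type*} (G : SGame V) (X : Set V)
    (W : Set V) (hW : W = G.SafeW X)
    (P : Set (V × V)) (hP : P = G.EdgesE W Wᶜ)
    (v : ℕ → V) (hplay : G.IsPlay v) (hv0 : v 0 ∈ W)
    (hψP : ∀ i, (v i, v (i + 1)) ∉ P) :
    ∀ i, v i ∈ X := by
  subst hW hP
  exact fun i => G.safeW_subset X
    (G.play_mem_of_forall_not_mem_edgesE (G.safeW_subset_preE_union_pre X) hplay hv0 hψP i)

/-- **Theorem 1 (safety template)**: with `W` the greatest fixed point of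
`Y ↦ X ∩ (Pre_□(Y) ∪ Pre(Y))` and `P = Edges_□(W, V∖W)`, every play starting in
`W` that never takes an edge of `P` stays in `X` forever. -/
theorem safety_template_winning {V : Type*} [Fintype V] (G : SGame V) (X : Set V)
    (W : Set V) (hW : W = G.SafeW X)
    (P : Set (V × V)) (hP : P = G.EdgesE W Wᶜ)
    (v : ℕ → V) (hplay : G.IsPlay v) (hv0 : v 0 ∈ W)
    (hψP : ∀ i, (v i, v (i + 1)) ∉ P) :
    ∀ i, v i ∈ X :=
  safety_template_winning_general G X W hW P hP v hplay hv0 hψP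
end

section
/- Let G = (V, E, (V_□, V_◯, V_△)) be a stochastic game and X ⊆ V. Let Attr'(X) be the greatest fixed point of Z ↦ lfp(Y ↦ X ∪ Pre(Y) ∪ Pre_△(Z, Y)). Then every Random-fair play v : ℕ → V with v 0 ∈ Attr'(X) visits X: there exists i with v i ∈ X. (This is the path-level content of the claim that from Attr'(X) every path reaches X almost surely, regardless of the players' strategies.) -/
/-!
Suppose a Random-fair play `v` starting in `A = Attr'(X)` avoids `X`. Since `A` is a fixed point
of `Y ↦ X ∪ Pre(Y) ∪ Pre_△(A, Y)`, the play never leaves `A`, and `A` is the least fixed point of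
that map. On the other hand the complement of the set `Inf(v)` of vertices visited infinitely
often is a prefixed point of the map: a vertex visited infinitely often cannot have all its
successors visited finitely often (the vertex set is finite), nor, by fairness, can a Random
vertex have such a successor. Hence `A` is disjoint from `Inf(v)`, which is nonempty and
consists of vertices of the play.
-/

def infVertices {V : Type*} (v : ℕ → V) : Set V := {u | {i | v i = u}.Infinite}

theorem infVertices_nonempty {V : Type*} [Finite V] (v : ℕ → V) : (infVertices v).Nonempty := by
  obtain ⟨u, hu⟩ := Finite.exists_infinite_fiber v
  exact ⟨u, Set.infinite_coe_iff.mp hu⟩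

theorem finite_setOf_succ_notMem_infVertices {V : Type*} [Finite V] (v : ℕ → V) :
    {i | v (i + 1) ∉ infVertices v}.Finite := by
  have hfin : {i | v i ∉ infVertices v}.Finite := by
    refine (Set.toFinite (infVertices v)ᶜ).biUnion (fun u hu => Set.not_infinite.mp hu)
      |>.subset fun i hi => Set.mem_biUnion hi rfl
  exact hfin.preimage Nat.succ_injective.injOn

namespace SGame

variable {V : Type*} {G : SGame V} {v : ℕ → V}

theorem notMem_infVertices_of_mem_Pre [Finite V] (hplay : G.IsPlay v) {u : V}
    (hu : u ∈ G.Pre (infVertices v)ᶜ) : u ∉ infVertices v := fun hinf => by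
  obtain ⟨i, hvi, hsucc⟩ := (hinf.sdiff (finite_setOf_succ_notMem_infVertices v)).nonempty
  exact hu _ (hvi ▸ hplay i) (not_not.mp hsucc)

theorem notMem_infVertices_of_mem_PreR (hfair : G.RandomFair v) {Z : Set V} {u : V}
    (hu : u ∈ G.PreR Z (infVertices v)ᶜ) : u ∉ infVertices v := fun hinf => by
  obtain ⟨hR, -, w, hw, he⟩ := hu
  refine hw (((hfair u hR hinf w he).image Nat.succ_injective.injOn).mono ?_)
  rintro _ ⟨i, hi, rfl⟩
  exact congrArg Prod.snd hi

theorem lfp_attrOp'_disjoint_infVertices [Finite V] (hplay : G.IsPlay v) (hfair : G.RandomFair v)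
    {X : Set V} (hX : ∀ i, v i ∉ X) (Z : Set V) :
    Disjoint (OrderHom.lfp (G.attrOp' X Z)) (infVertices v) := by
  refine Set.subset_compl_iff_disjoint_right.mp (OrderHom.lfp_le _ ?_)
  rintro u ((hx | hpre) | hpreR)
  · exact fun hinf => hinf.nonempty.elim fun i hi => hX i (hi.symm ▸ hx)
  · exact notMem_infVertices_of_mem_Pre hplay hpre
  · exact notMem_infVertices_of_mem_PreR hfair hpreR

theorem mem_of_isPlay_of_subset_attrOp' (hplay : G.IsPlay v) {X A : Set V}
    (hA : A ⊆ G.attrOp' X A A) (hX : ∀ i, v i ∉ X) (h0 : v 0 ∈ A) : ∀ i, v i ∈ A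
  | 0 => h0
  | i + 1 => by
    rcases hA (mem_of_isPlay_of_subset_attrOp' hplay hA hX h0 i) with (hx | hpre) | hpreR
    · exact absurd hx (hX i)
    · exact hpre _ (hplay i)
    · exact hpreR.2.1 _ (hplay i)

theorem Attr'_eq_lfp (G : SGame V) (X : Set V) :
    G.Attr' X = OrderHom.lfp (G.attrOp' X (G.Attr' X)) :=
  (OrderHom.map_gfp (G.attrOuter' X)).symm

theorem Attr'_subset_attrOp' (G : SGame V) (X : Set V) :
    G.Attr' X ⊆ G.attrOp' X (G.Attr' X) (G.Attr' X) := by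
  have h := OrderHom.map_lfp (G.attrOp' X (G.Attr' X))
  rw [← Attr'_eq_lfp] at h
  exact h.ge

end SGame

/-- Every Random-fair play starting in
`Attr'(X) = gfp (Z ↦ lfp (Y ↦ X ∪ Pre(Y) ∪ Pre_△(Z,Y)))` visits `X`. -/
theorem attr'_visits_of_randomFair {V : Type*} [Fintype V] (G : SGame V) (X : Set V)
    (v : ℕ → V) (hplay : G.IsPlay v) (hfair : G.RandomFair v)
    (hv0 : v 0 ∈ G.Attr' X) :
    ∃ i, v i ∈ X := by
  by_contra! hX
  obtain ⟨u, hu⟩ := infVertices_nonempty v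
  obtain ⟨i, rfl⟩ := hu.nonempty
  have hstay := SGame.mem_of_isPlay_of_subset_attrOp' hplay (G.Attr'_subset_attrOp' X) hX hv0
  have hdisj := SGame.lfp_attrOp'_disjoint_infVertices hplay hfair hX (G.Attr' X)
  rw [← SGame.Attr'_eq_lfp] at hdisj
  exact hdisj.notMem_of_mem_left (hstay i) hu
end

section
/- Let G = (V, E, (V_□, V_◯, V_△)) be a stochastic game and X ⊆ V. Let A = Attr'(X), W = Attr'_□(A), P = Edges_□(W, V∖W), and C = Edges_□(W∖A, W∖A). Then every Random-fair play v : ℕ → V with v 0 ∈ W that satisfies ψ_P (no edge of P is ever taken) and ψ_C (edges of C are taken only finitely often) visits X: there exists i with v i ∈ X. (Theorem 2 of the paper, with almost-sure reachability rendered as reachability along Random-fair plays: the template (P, ∅, C) is winning for the reachability objective ◇X.) -/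
section Aux

lemma exists_infinite_fiber_on {V : Type*} [Finite V] (f : ℕ → V) {I : Set ℕ}
    (hI : I.Infinite) : ∃ u, {i | i ∈ I ∧ f i = u}.Infinite := by
  by_contra h
  push_neg at h
  exact hI ((Set.finite_iUnion h).subset fun i hi => Set.mem_iUnion.2 ⟨f i, hi, rfl⟩)

lemma infinite_shift {V : Type*} (v : ℕ → V) {u' : V} {K : Set ℕ}
    (hK : K.Infinite) (hval : ∀ i ∈ K, v (i + 1) = u') : {j | v j = u'}.Infinite := by
  have hsub : (fun i => i + 1) '' K ⊆ {j | v j = u'} := by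
    rintro j ⟨i, hi, rfl⟩; exact hval i hi
  exact ((hK.image (Set.injOn_of_injective (add_left_injective 1))).mono hsub)

end Aux

/-- **Theorem 2 (reachability template)**: with `A = Attr'(X)`, `W = Attr'_□(A)`,
`P = Edges_□(W, V∖W)` and `C = Edges_□(W∖A, W∖A)`, every Random-fair play
starting in `W` that satisfies `ψ_P` and `ψ_C` visits `X`. -/
theorem reachability_template_winning {V : Type*} [Fintype V] (G : SGame V) (X : Set V)
    (A W : Set V) (hA : A = G.Attr' X) (hW : W = G.AttrE' A)
    (P C : Set (V × V)) (hP : P = G.EdgesE W Wᶜ) (hC : C = G.EdgesE (W \ A) (W \ A))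
    (v : ℕ → V) (hplay : G.IsPlay v) (hfair : G.RandomFair v) (hv0 : v 0 ∈ W)
    (hψP : ∀ i, (v i, v (i + 1)) ∉ P)
    (hψC : ∃ N, ∀ i ≥ N, (v i, v (i + 1)) ∉ C) :
    ∃ i, v i ∈ X := by
  by_contra hcon
  push_neg at hcon
  obtain ⟨N, hN⟩ := hψC
  have hAlfp : OrderHom.lfp (G.attrOp' X A) = A := by
    rw [hA]; exact OrderHom.map_gfp (G.attrOuter' X)
  have hAeq : X ∪ G.Pre A ∪ G.PreR A A = A := by
    have h := OrderHom.map_lfp (G.attrOp' X A)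
    rw [hAlfp] at h; exact h
  have hWlfp : OrderHom.lfp (G.attrOpE' A W) = W := by
    rw [hW]; exact OrderHom.map_gfp (G.attrOuterE' A)
  have hWeq : A ∪ G.PreE W ∪ G.Pre W ∪ G.PreR W W = W := by
    have h := OrderHom.map_lfp (G.attrOpE' A W)
    rw [hWlfp] at h; exact h
  have hAW : A ⊆ W := by
    intro u hu; rw [← hWeq]; exact Or.inl (Or.inl (Or.inl hu))
  have hAstep : ∀ i, v i ∈ A → v (i + 1) ∈ A := by
    intro i hi
    rw [← hAeq] at hi
    rcases hi with (hx | hpre) | hr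
    · exact absurd hx (hcon i)
    · exact hpre _ (hplay i)
    · exact hr.2.1 _ (hplay i)
  have hWstep : ∀ i, v i ∈ W → v (i + 1) ∈ W := by
    intro i hi
    have hiW : v i ∈ W := hi
    rw [← hWeq] at hi
    rcases hi with ((ha | he) | hpre) | hr
    · exact hAW (hAstep i ha)
    · by_contra hnw
      exact hψP i (by rw [hP]; exact ⟨hplay i, hiW, he.1, hnw⟩)
    · exact hpre _ (hplay i)
    · exact hr.2.1 _ (hplay i)
  have hWall : ∀ i, v i ∈ W := by
    intro i; induction i with
    | zero => exact hv0
    | succ n ih => exact hWstep n ih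
  by_cases hAever : ∃ k, v k ∈ A
  · obtain ⟨k, hk⟩ := hAever
    obtain ⟨u, hu⟩ := exists_infinite_fiber_on v (Set.Ici_infinite k)
    have huS : {j | v j = u}.Infinite := hu.mono fun i hi => hi.2
    have hAall : ∀ i, k ≤ i → v i ∈ A := by
      intro i hi
      induction i, hi using Nat.le_induction with
      | base => exact hk
      | succ n hn ih => exact hAstep n ih
    obtain ⟨i0, hi0I, hi0u⟩ := hu.nonempty
    have huA : u ∈ A := hi0u ▸ hAall i0 hi0I
    have hsub : A ⊆ {w | ¬ {j | v j = w}.Infinite} := by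
      rw [← hAlfp]
      apply OrderHom.lfp_le
      intro w hw
      have hw' : w ∈ X ∪ G.Pre {w | ¬ {j | v j = w}.Infinite}
          ∪ G.PreR A {w | ¬ {j | v j = w}.Infinite} := hw
      rcases hw' with (hx | hpre) | hr
      · intro hwS
        obtain ⟨j, hj⟩ := hwS.nonempty
        exact hcon j (by rw [hj]; exact hx)
      · intro hwS
        obtain ⟨u', hu'⟩ := exists_infinite_fiber_on (fun i => v (i + 1)) hwS
        have hu'S : {j | v j = u'}.Infinite := infinite_shift v hu' fun i hi => hi.2
        obtain ⟨i, hiw, hiu'⟩ := hu'.nonempty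
        have hT := hpre u' (by rw [← hiw, ← hiu']; exact hplay i)
        exact hT hu'S
      · intro hwS
        obtain ⟨hVR, hall, u', hu'T, he⟩ := hr
        have hfair' := hfair w hVR hwS u' he
        have hu'S : {j | v j = u'}.Infinite :=
          infinite_shift v hfair' fun i hi => congrArg Prod.snd hi
        exact hu'T hu'S
    exact (hsub huA) huS
  · push_neg at hAever
    have hWA : ∀ i, v i ∈ W \ A := fun i => ⟨hWall i, hAever i⟩
    obtain ⟨u, hu⟩ := exists_infinite_fiber_on v (Set.Ici_infinite 0)
    have huS : {j | v j = u}.Infinite := hu.mono fun i hi => hi.2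
    obtain ⟨i0, _, hi0u⟩ := hu.nonempty
    have hsub : W ⊆ {w | ¬ {j | v j = w}.Infinite} ∪ A := by
      rw [← hWlfp]
      apply OrderHom.lfp_le
      intro w hw
      have hw' : w ∈ A ∪ G.PreE ({w | ¬ {j | v j = w}.Infinite} ∪ A)
          ∪ G.Pre ({w | ¬ {j | v j = w}.Infinite} ∪ A)
          ∪ G.PreR W ({w | ¬ {j | v j = w}.Infinite} ∪ A) := hw
      rcases hw' with ((ha | he) | hpre) | hr
      · exact Or.inr ha
      · left
        intro hwS
        obtain ⟨i, hiw, hiN⟩ := (hwS.diff (Set.finite_Iio N)).nonempty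
        apply hN i (not_lt.1 hiN)
        rw [hC]
        exact ⟨hplay i, by rw [hiw]; exact (hiw ▸ hWA i), by rw [hiw]; exact he.1, hWA (i + 1)⟩
      · left
        intro hwS
        obtain ⟨u', hu'⟩ := exists_infinite_fiber_on (fun i => v (i + 1)) hwS
        have hu'S : {j | v j = u'}.Infinite := infinite_shift v hu' fun i hi => hi.2
        obtain ⟨i, hiw, hiu'⟩ := hu'.nonempty
        rcases hpre u' (by rw [← hiw, ← hiu']; exact hplay i) with h1 | h2
        · exact h1 hu'S
        · exact hAever (i + 1) (by rw [hiu']; exact h2)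
      · left
        intro hwS
        obtain ⟨hVR, hall, u', hu'T, he⟩ := hr
        have hfair' := hfair w hVR hwS u' he
        have hu'S : {j | v j = u'}.Infinite :=
          infinite_shift v hfair' fun i hi => congrArg Prod.snd hi
        obtain ⟨i, hi⟩ := hfair'.nonempty
        have hiu' : v (i + 1) = u' := congrArg Prod.snd hi
        rcases hu'T with h1 | h2
        · exact h1 hu'S
        · exact hAever (i + 1) (by rw [hiu']; exact h2)
    have huW : u ∈ W := by rw [← hi0u]; exact hWall i0
    rcases hsub huW with h1 | h2
    · exact h1 huS
    · exact hAever i0 (by rw [hi0u]; exact h2)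
end

section
/- Let G = (V, E, (V_□, V_◯, V_△)) be a stochastic game, X ⊆ V, and let W be the greatest fixed point W = gfp(Z ↦ lfp(Y ↦ (X ∩ Pre_□(Z) ∩ Pre(Z)) ∪ Pre_□(Y) ∪ Pre(Y) ∪ Pre_△(Z,Y))). Then every vertex u ∈ W ∩ V_□ has at least one successor in W, and every vertex u ∈ W with u ∉ V_□ has all its successors in W. Consequently, every play starting in W that never takes an edge of Edges_□(W, V∖W) remains in W forever. -/
namespace SGame

variable {V : Type*}

/-- The monotone map `Y ↦ (X ∩ Pre_□(Z) ∩ Pre(Z)) ∪ Pre_□(Y) ∪ Pre(Y) ∪ Pre_△(Z,Y)`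
(for a fixed `Z`). -/
def buchiOp (G : SGame V) (X Z : Set V) : Set V →o Set V :=
  ⟨fun Y => (X ∩ G.PreE Z ∩ G.Pre Z) ∪ G.PreE Y ∪ G.Pre Y ∪ G.PreR Z Y, fun _ _ h =>
    Set.union_subset_union
      (Set.union_subset_union
        (Set.union_subset_union_right _ (G.PreE_mono h)) (G.Pre_mono h))
      (G.PreR_mono le_rfl h)⟩

/-- The monotone map `Z ↦ lfp (Y ↦ (X ∩ Pre_□(Z) ∩ Pre(Z)) ∪ Pre_□(Y) ∪ Pre(Y) ∪ Pre_△(Z,Y))`. -/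
def buchiOuter (G : SGame V) (X : Set V) : Set V →o Set V :=
  ⟨fun Z => OrderHom.lfp (G.buchiOp X Z), by
    intro Z Z' h
    exact OrderHom.lfp.monotone fun Y =>
      Set.union_subset_union
        (Set.union_subset_union
          (Set.union_subset_union
            (Set.inter_subset_inter
              (Set.inter_subset_inter (le_refl X) (G.PreE_mono h)) (G.Pre_mono h))
            le_rfl)
          le_rfl)
        (G.PreR_mono h le_rfl)⟩

/-- `W = gfp (Z ↦ lfp (Y ↦ (X ∩ Pre_□(Z) ∩ Pre(Z)) ∪ Pre_□(Y) ∪ Pre(Y) ∪ Pre_△(Z,Y)))`,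
the winning set of the Büchi objective `□◇X`. -/
def BuchiW (G : SGame V) (X : Set V) : Set V := OrderHom.gfp (G.buchiOuter X)

end SGame

/-!
Unfolding the outer greatest fixed point once shows that `W` is the least fixed point of the
inner operator at `Z = W`, hence a fixed point of it. Every summand of that operator at `Y = Z = W`
lies in `Pre_□(W) ∪ Pre(W)`, so each vertex of `W` is either an Even vertex with a successor
in `W` or a vertex all of whose successors lie in `W`; the statement about plays follows by induction.
-/

namespace SGame

variable {V : Type*} (G : SGame V)

lemma buchiOp_self_subset (X Z : Set V) : G.buchiOp X Z Z ⊆ G.PreE Z ∪ G.Pre Z := by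
  rintro u (((⟨⟨-, hE⟩, -⟩ | hE) | hA) | ⟨-, hA, -⟩)
  exacts [Or.inl hE, Or.inl hE, Or.inr hA, Or.inr hA]

lemma buchiOp_buchiW (X : Set V) : G.buchiOp X (G.BuchiW X) (G.BuchiW X) = G.BuchiW X := by
  have hlfp : OrderHom.lfp (G.buchiOp X (G.BuchiW X)) = G.BuchiW X :=
    OrderHom.map_gfp (G.buchiOuter X)
  calc G.buchiOp X (G.BuchiW X) (G.BuchiW X)
      = G.buchiOp X (G.BuchiW X) (OrderHom.lfp (G.buchiOp X (G.BuchiW X))) := by rw [hlfp]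
    _ = G.BuchiW X := (OrderHom.map_lfp _).trans hlfp

lemma buchiW_subset_preE_union_pre (X : Set V) :
    G.BuchiW X ⊆ G.PreE (G.BuchiW X) ∪ G.Pre (G.BuchiW X) := by
  conv_lhs => rw [← G.buchiOp_buchiW X]
  exact G.buchiOp_self_subset X _

variable {G} {W : Set V}

lemma exists_succ_mem_of_subset_preE_union_pre (hW : W ⊆ G.PreE W ∪ G.Pre W) {u : V}
    (hu : u ∈ W) : ∃ w ∈ W, (u, w) ∈ G.E := by
  rcases hW hu with ⟨-, hE⟩ | hA
  · exact hE
  · obtain ⟨w, he⟩ := G.serial u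
    exact ⟨w, hA w he, he⟩

lemma succ_mem_of_subset_preE_union_pre (hW : W ⊆ G.PreE W ∪ G.Pre W) {u w : V}
    (hu : u ∈ W) (hu' : u ∉ G.VE) (he : (u, w) ∈ G.E) : w ∈ W := by
  rcases hW hu with ⟨hE, -⟩ | hA
  · exact absurd hE hu'
  · exact hA w he

lemma IsPlay.mem_of_not_mem_edgesE (hW : ∀ u ∈ W, u ∉ G.VE → ∀ w, (u, w) ∈ G.E → w ∈ W)
    {v : ℕ → V} (hv : G.IsPlay v) (h0 : v 0 ∈ W)
    (hstay : ∀ i, (v i, v (i + 1)) ∉ G.EdgesE W Wᶜ) (i : ℕ) : v i ∈ W := by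
  induction i with
  | zero => exact h0
  | succ n ih =>
    by_cases hE : v n ∈ G.VE
    · by_contra hout
      exact hstay n ⟨hv n, ih, hE, hout⟩
    · exact hW (v n) ih hE _ (hv n)

end SGame

theorem buchiW_closed_general {V : Type*} (G : SGame V) (X : Set V)
    (W : Set V) (hW : W = G.BuchiW X) :
    (∀ u ∈ W ∩ G.VE, ∃ w ∈ W, (u, w) ∈ G.E) ∧
    (∀ u ∈ W, u ∉ G.VE → ∀ w, (u, w) ∈ G.E → w ∈ W) ∧
    (∀ v : ℕ → V, G.IsPlay v → v 0 ∈ W →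
      (∀ i, (v i, v (i + 1)) ∉ G.EdgesE W Wᶜ) → ∀ i, v i ∈ W) := by
  subst hW
  have hW := G.buchiW_subset_preE_union_pre X
  have hstep : ∀ u ∈ G.BuchiW X, u ∉ G.VE → ∀ w, (u, w) ∈ G.E → w ∈ G.BuchiW X :=
    fun _ hu hu' _ he => SGame.succ_mem_of_subset_preE_union_pre hW hu hu' he
  exact ⟨fun _ hu => SGame.exists_succ_mem_of_subset_preE_union_pre hW hu.1, hstep,
    fun _ hv h0 hstay => hv.mem_of_not_mem_edgesE hstep h0 hstay⟩

/-- Closedness of the Büchi winning region `W`: every Even vertex of `W` has a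
successor in `W`, every non-Even vertex of `W` has all its successors in `W`,
and consequently every play starting in `W` that never takes an edge of
`Edges_□(W, V∖W)` remains in `W` forever. -/
theorem buchiW_closed {V : Type*} [Fintype V] (G : SGame V) (X : Set V)
    (W : Set V) (hW : W = G.BuchiW X) :
    (∀ u ∈ W ∩ G.VE, ∃ w ∈ W, (u, w) ∈ G.E) ∧
    (∀ u ∈ W, u ∉ G.VE → ∀ w, (u, w) ∈ G.E → w ∈ W) ∧
    (∀ v : ℕ → V, G.IsPlay v → v 0 ∈ W →
      (∀ i, (v i, v (i + 1)) ∉ G.EdgesE W Wᶜ) → ∀ i, v i ∈ W) :=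
  buchiW_closed_general G X W hW
end

section
/- Let G = (V, E, (V_□, V_◯, V_△)) be a stochastic game and X ⊆ V. Let X* = gfp(Y ↦ X ∩ (Pre_□(Y) ∪ Pre(Y))), A = Attr'(X*), W = Attr'_□(A), P = Edges_□(W, V∖W), and C = Edges_□(X*, W∖X*) ∪ Edges_□(W∖A, W∖A). Then every Random-fair play v : ℕ → V with v 0 ∈ W that satisfies ψ_P (no edge of P is ever taken) and ψ_C (edges of C are taken only finitely often) eventually stays in X: there exists N such that v i ∈ X for all i ≥ N. (Theorem 4 of the paper, with almost-sure satisfaction rendered along Random-fair plays: the co-Büchi template (P, ∅, C) is winning for ◇□X.) -/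
section Aux
open Set

private lemma shift_infinite {V : Type*} {v : ℕ → V} {w : V} (h : {i | v (i + 1) = w}.Infinite) :
    {i | v i = w}.Infinite := by
  have hsub : (fun i => i + 1) '' {i | v (i + 1) = w} ⊆ {i | v i = w} := by
    rintro j ⟨i, hi, rfl⟩; exact hi
  exact (h.image (fun a _ b _ hab => by omega)).mono hsub

private lemma pigeon {V : Type*} [Finite V] (g : ℕ → V) {T : Set ℕ} (hT : T.Infinite) :
    ∃ u : V, {i | i ∈ T ∧ g i = u}.Infinite := by
  by_contra h
  push_neg at h
  have hsub : T ⊆ ⋃ u : V, {i | i ∈ T ∧ g i = u} := fun i hi => Set.mem_iUnion.2 ⟨g i, hi, rfl⟩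
  exact hT ((Set.finite_iUnion h).subset hsub)

private lemma reach {V : Type*} [Finite V] (v : ℕ → V) (f : Set V →o Set V) (B : Set V) (M : ℕ)
    (hmem : ∀ i, M ≤ i → v i ∈ OrderHom.lfp f)
    (hstep : ∀ (Y : Set V) (u : V), u ∈ f Y → u ∉ B → {i | M ≤ i ∧ v i = u}.Infinite →
      (∃ u' ∈ B, {i | v i = u'}.Infinite) ∨ ∃ w ∈ Y, {i | v i = w}.Infinite) :
    ∃ u ∈ B, {i | v i = u}.Infinite := by
  by_contra h
  push_neg at h
  have hpre : f {u | ¬ {i | M ≤ i ∧ v i = u}.Infinite} ≤ {u | ¬ {i | M ≤ i ∧ v i = u}.Infinite} := by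
    intro u hu
    by_cases hB : u ∈ B
    · exact fun hinf => hinf ((h u hB).subset fun i hi => hi.2)
    · intro hinf
      rcases hstep _ u hu hB hinf with ⟨u', hu', hinf'⟩ | ⟨w, hwQ, hwinf⟩
      · exact hinf' (h u' hu')
      · exact hwQ ((hwinf.diff (Set.finite_Iio M)).mono fun i hi => ⟨not_lt.mp hi.2, hi.1⟩)
  have hQ := OrderHom.lfp_le f hpre
  obtain ⟨u, hu⟩ := pigeon v (Set.Ici_infinite M)
  obtain ⟨i, hiM, hiu⟩ := hu.nonempty
  have hmemQ := hQ (hmem i hiM)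
  rw [Set.mem_setOf_eq, hiu] at hmemQ
  exact hmemQ (hu.mono fun j hj => ⟨hj.1, hj.2⟩)

end Aux

/-- **Theorem 4 (co-Büchi template)**: with `X* = gfp (Y ↦ X ∩ (Pre_□(Y) ∪ Pre(Y)))`,
`A = Attr'(X*)`, `W = Attr'_□(A)`, `P = Edges_□(W, V∖W)` and
`C = Edges_□(X*, W∖X*) ∪ Edges_□(W∖A, W∖A)`, every Random-fair play starting in
`W` that satisfies `ψ_P` and `ψ_C` eventually stays in `X`. -/
theorem cobuchi_template_winning {V : Type*} [Fintype V] (G : SGame V) (X : Set V)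
    (Xs A W : Set V) (hXs : Xs = G.SafeW X) (hA : A = G.Attr' Xs) (hW : W = G.AttrE' A)
    (P C : Set (V × V)) (hP : P = G.EdgesE W Wᶜ)
    (hC : C = G.EdgesE Xs (W \ Xs) ∪ G.EdgesE (W \ A) (W \ A))
    (v : ℕ → V) (hplay : G.IsPlay v) (hfair : G.RandomFair v) (hv0 : v 0 ∈ W)
    (hψP : ∀ i, (v i, v (i + 1)) ∉ P)
    (hψC : ∃ N, ∀ i ≥ N, (v i, v (i + 1)) ∉ C) :
    ∃ N, ∀ i ≥ N, v i ∈ X := by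
  classical
  obtain ⟨N, hN⟩ := hψC
  -- fixed-point equations
  have hXsEq : Xs = X ∩ (G.PreE Xs ∪ G.Pre Xs) := by
    rw [hXs]; exact (OrderHom.map_gfp (G.safetyOp X)).symm
  have hAlfp : A = OrderHom.lfp (G.attrOp' Xs A) := by
    rw [hA]; exact (OrderHom.map_gfp (G.attrOuter' Xs)).symm
  have hAfix := OrderHom.map_lfp (G.attrOp' Xs A)
  rw [← hAlfp] at hAfix
  have hAEq : A = Xs ∪ G.Pre A ∪ G.PreR A A := hAfix.symm
  have hWlfp : W = OrderHom.lfp (G.attrOpE' A W) := by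
    rw [hW]; exact (OrderHom.map_gfp (G.attrOuterE' A)).symm
  have hWfix := OrderHom.map_lfp (G.attrOpE' A W)
  rw [← hWlfp] at hWfix
  have hWEq : W = A ∪ G.PreE W ∪ G.Pre W ∪ G.PreR W W := hWfix.symm
  have hXsA : Xs ⊆ A := by
    intro u hu; rw [hAEq]
    exact Set.mem_union_left _ (Set.mem_union_left _ hu)
  have hAW : A ⊆ W := by
    intro u hu; rw [hWEq]
    exact Set.mem_union_left _ (Set.mem_union_left _ (Set.mem_union_left _ hu))
  have hXsX : Xs ⊆ X := by
    intro u hu; rw [hXsEq] at hu; exact hu.1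
  -- edges from Even vertices of W stay in W
  have hPW : ∀ i, v i ∈ W → v i ∈ G.VE → v (i + 1) ∈ W := by
    intro i h1 h2; by_contra hc
    exact hψP i (by rw [hP]; exact ⟨hplay i, h1, h2, hc⟩)
  -- the play stays in W
  have hWinv : ∀ i, v i ∈ W := by
    intro i; induction i with
    | zero => exact hv0
    | succ i ih =>
      by_cases hE : v i ∈ G.VE
      · exact hPW i ih hE
      · have hu := ih; rw [hWEq] at hu
        rcases hu with ((hA' | hPreE) | hPre) | hPreR
        · rw [hAEq] at hA'
          rcases hA' with (hXs' | hPre) | hPreR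
          · rw [hXsEq] at hXs'
            rcases hXs'.2 with hPreE | hPre
            · exact absurd hPreE.1 hE
            · exact hAW (hXsA (hPre _ (hplay i)))
          · exact hAW (hPre _ (hplay i))
          · exact hAW (hPreR.2.1 _ (hplay i))
        · exact absurd hPreE.1 hE
        · exact hPre _ (hplay i)
        · exact hPreR.2.1 _ (hplay i)
  -- after N, Even vertices of Xs stay in Xs
  have hCX : ∀ i, N ≤ i → v i ∈ Xs → v i ∈ G.VE → v (i + 1) ∈ Xs := by
    intro i hi h1 h2
    have hw : v (i + 1) ∈ W := hPW i (hWinv i) h2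
    by_contra hc
    exact hN i hi (by rw [hC]; exact Or.inl ⟨hplay i, h1, h2, hw, hc⟩)
  -- after N, Xs is trapping
  have hXstrap : ∀ i, N ≤ i → v i ∈ Xs → v (i + 1) ∈ Xs := by
    intro i hi h1
    by_cases h2 : v i ∈ G.VE
    · exact hCX i hi h1 h2
    · have h1' := h1; rw [hXsEq] at h1'
      rcases h1'.2 with hPreE | hPre
      · exact absurd hPreE.1 h2
      · exact hPre _ (hplay i)
  -- after N, A is trapping
  have hAtrap : ∀ i, N ≤ i → v i ∈ A → v (i + 1) ∈ A := by
    intro i hi h1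
    have h1' := h1; rw [hAEq] at h1'
    rcases h1' with (hXs' | hPre) | hPreR
    · exact hXsA (hXstrap i hi hXs')
    · exact hPre _ (hplay i)
    · exact hPreR.2.1 _ (hplay i)
  -- after N, Even vertices outside A move to A
  have hCW : ∀ i, N ≤ i → v i ∉ A → v i ∈ G.VE → v (i + 1) ∈ A := by
    intro i hi h1 h2
    have hw : v (i + 1) ∈ W := hPW i (hWinv i) h2
    by_contra hc
    exact hN i hi (by rw [hC]; exact Or.inr ⟨hplay i, ⟨hWinv i, h1⟩, h2, hw, hc⟩)
  -- the play reaches A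
  have hreachA : ∃ u ∈ A, {i | v i = u}.Infinite := by
    apply reach v (G.attrOpE' A W) A N
    · intro i hi; rw [← hWlfp]; exact hWinv i
    · intro Y u hu hB hinf
      have hu' : u ∈ A ∪ G.PreE Y ∪ G.Pre Y ∪ G.PreR W Y := hu
      rcases hu' with ((hA' | hPreE) | hPre) | hPreR
      · exact absurd hA' hB
      · left
        obtain ⟨w, hw⟩ := pigeon (fun i => v (i + 1)) hinf
        obtain ⟨i, ⟨hiN, hiu⟩, hiw⟩ := hw.nonempty
        refine ⟨w, ?_, shift_infinite (hw.mono fun j hj => hj.2)⟩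
        have hvA : v (i + 1) ∈ A :=
          hCW i hiN (by rw [hiu]; exact hB) (by rw [hiu]; exact hPreE.1)
        rw [← hiw]; exact hvA
      · right
        obtain ⟨w, hw⟩ := pigeon (fun i => v (i + 1)) hinf
        obtain ⟨i, ⟨hiN, hiu⟩, hiw⟩ := hw.nonempty
        refine ⟨w, ?_, shift_infinite (hw.mono fun j hj => hj.2)⟩
        have he := hplay i; rw [hiu] at he
        rw [← hiw]; exact hPre _ he
      · right
        obtain ⟨hVR, _, w, hwY, hedge⟩ := hPreR
        have huinf : {i | v i = u}.Infinite := hinf.mono fun i hi => hi.2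
        have hf := hfair u hVR huinf w hedge
        exact ⟨w, hwY, shift_infinite (hf.mono fun i hi => show v (i + 1) = w from congrArg Prod.snd hi)⟩
  obtain ⟨uA, huA, hinfA⟩ := hreachA
  obtain ⟨M1, hM1⟩ := ((hinfA.diff (Set.finite_Iio N)).nonempty)
  have hM1N : N ≤ M1 := not_lt.mp hM1.2
  have hAfrom : ∀ j, M1 ≤ j → v j ∈ A := by
    intro j hj
    induction j, hj using Nat.le_induction with
    | base => rw [hM1.1]; exact huA
    | succ j hj ih => exact hAtrap j (le_trans hM1N hj) ih
  -- the play reaches Xs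
  have hreachX : ∃ u ∈ Xs, {i | v i = u}.Infinite := by
    apply reach v (G.attrOp' Xs A) Xs M1
    · intro i hi; rw [← hAlfp]; exact hAfrom i hi
    · intro Y u hu hB hinf
      have hu' : u ∈ Xs ∪ G.Pre Y ∪ G.PreR A Y := hu
      rcases hu' with (hXs' | hPre) | hPreR
      · exact absurd hXs' hB
      · right
        obtain ⟨w, hw⟩ := pigeon (fun i => v (i + 1)) hinf
        obtain ⟨i, ⟨hiN, hiu⟩, hiw⟩ := hw.nonempty
        refine ⟨w, ?_, shift_infinite (hw.mono fun j hj => hj.2)⟩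
        have he := hplay i; rw [hiu] at he
        rw [← hiw]; exact hPre _ he
      · right
        obtain ⟨hVR, _, w, hwY, hedge⟩ := hPreR
        have huinf : {i | v i = u}.Infinite := hinf.mono fun i hi => hi.2
        have hf := hfair u hVR huinf w hedge
        exact ⟨w, hwY, shift_infinite (hf.mono fun i hi => show v (i + 1) = w from congrArg Prod.snd hi)⟩
  obtain ⟨uX, huX, hinfX⟩ := hreachX
  obtain ⟨M2, hM2⟩ := ((hinfX.diff (Set.finite_Iio M1)).nonempty)
  have hM2N : N ≤ M2 := le_trans hM1N (not_lt.mp hM2.2)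
  refine ⟨M2, fun k hk => hXsX ?_⟩
  induction k, hk using Nat.le_induction with
  | base => rw [hM2.1]; exact huX
  | succ k hk ih => exact hXstrap k (le_trans hM2N hk) ih
end

section
/- Let G = (V, E, (V_□, V_◯, V_△)) be a stochastic game, T = (P, 𝑳, C) a strategy template, W ⊆ V, and let 0 < α < 1 and β ≥ 1 be real parameters. Let σ̂ be the mixed strategy of ParameterizedExtract: after a finite history h ending at an Even vertex u, σ̂ assigns to each successor u' a probability proportional to the weight d(h)(u,u') = α^{c_C(h,(u,u'))} · β^{c_L(h,(u,u'))} among edges (u,u') ∈ E ∖ P, where c_C(h,e) is the number of occurrences of e in h if e ∈ C (and 0 otherwise) and c_L(h,e) is the number of occurrences of e in h if e belongs to some live-group in 𝑳 (and 0 otherwise). Then: (1) for every pure strategy σ̃ such that every edge σ̃ selects lies in E ∖ (P ∪ C), the language L_W(σ̃) is contained in L_W(σ̂), i.e., σ̃ is no more permissive than σ̂; and (2) if moreover there exists a play v ∈ L_W(σ̂) with (v i, v (i+1)) ∈ C for some i, then L_W(σ̃) ⊊ L_W(σ̂), i.e., σ̂ is strictly more permissive than σ̃. (Theorem 7 of the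 paper.) -/
open scoped Classical

/-- The number of occurrences of the edge `e` among consecutive pairs of the
finite history `h` (a finite sequence of vertices). -/
noncomputable def edgeCount {V : Type*} (e : V × V) : List V → ℕ
  | a :: b :: t => (if (a, b) = e then 1 else 0) + edgeCount e (b :: t)
  | _ => 0

/-- The weight `d(h)(e) = α ^ c_C(h,e) · β ^ c_L(h,e)` used by
`ParameterizedExtract`, where `c_C(h,e)` is the number of occurrences of `e` in
`h` if `e ∈ C` (and `0` otherwise), and `c_L(h,e)` is the number of occurrences
of `e` in `h` if `e` belongs to some live-group (i.e. `e ∈ LU`, and `0`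
otherwise). -/
noncomputable def pweight {V : Type*} (α β : ℝ) (C LU : Set (V × V))
    (h : List V) (e : V × V) : ℝ :=
  α ^ (if e ∈ C then edgeCount e h else 0) * β ^ (if e ∈ LU then edgeCount e h else 0)

/-- The mixed strategy `σ̂` of `ParameterizedExtract`: after the history
`h ++ [u]` (prefix `h`, current Even vertex `u`), the probability of moving to
`u'` is the weight of `(u,u')` normalized over all edges `(u,u'') ∈ E ∖ P`
(and `0` for edges outside `E ∖ P`). -/
noncomputable def sigmaHat {V : Type*} [Fintype V] (G : SGame V)
    (P C : Set (V × V)) (Ls : Set (Set (V × V))) (α β : ℝ)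
    (h : List V) (u u' : V) : ℝ :=
  if (u, u') ∈ G.E \ P then
    pweight α β C (⋃₀ Ls) (h ++ [u]) (u, u') /
      ∑ w ∈ Finset.univ.filter (fun w => (u, w) ∈ G.E \ P),
        pweight α β C (⋃₀ Ls) (h ++ [u]) (u, w)
  else 0

/-- The strict prefix `v 0, …, v (i-1)` of a play, as a finite history. -/
def prefixList {V : Type*} (v : ℕ → V) (i : ℕ) : List V :=
  List.ofFn fun j : Fin i => v j

/-- The language `L_W(σ̃)` of a pure strategy `σ̃` (taking the history prefix and
the current Even vertex): plays starting in `W` all of whose Even moves agree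
with `σ̃`. -/
def LangPure {V : Type*} (G : SGame V) (W : Set V) (σ : List V → V → V) :
    Set (ℕ → V) :=
  {v | G.IsPlay v ∧ v 0 ∈ W ∧ ∀ i, v i ∈ G.VE → σ (prefixList v i) (v i) = v (i + 1)}

/-- The language `L_W(σ)` of a mixed strategy `σ` (taking the history prefix,
the current Even vertex and a candidate successor to its probability): plays
starting in `W` all of whose Even moves receive positive probability. -/
def LangMixed {V : Type*} (G : SGame V) (W : Set V) (σ : List V → V → V → ℝ) :
    Set (ℕ → V) :=
  {v | G.IsPlay v ∧ v 0 ∈ W ∧ ∀ i, v i ∈ G.VE → 0 < σ (prefixList v i) (v i) (v (i + 1))}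

theorem pweight_pos {V : Type*} {α β : ℝ} (hα : 0 < α) (hβ : 0 < β) (C LU : Set (V × V))
    (h : List V) (e : V × V) : 0 < pweight α β C LU h e :=
  mul_pos (pow_pos hα _) (pow_pos hβ _)

theorem sigmaHat_pos {V : Type*} [Fintype V] (G : SGame V) (P C : Set (V × V))
    (Ls : Set (Set (V × V))) {α β : ℝ} (hα : 0 < α) (hβ : 0 < β) (h : List V) {u u' : V}
    (he : (u, u') ∈ G.E \ P) : 0 < sigmaHat G P C Ls α β h u u' := by
  rw [sigmaHat, if_pos he]
  exact div_pos (pweight_pos hα hβ _ _ _ _) <| Finset.sum_pos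
    (fun _ _ => pweight_pos hα hβ _ _ _ _) ⟨u', Finset.mem_filter.mpr ⟨Finset.mem_univ _, he⟩⟩

theorem LangPure_subset_LangMixed {V : Type*} (G : SGame V) (W : Set V)
    {σ : List V → V → V} {τ : List V → V → V → ℝ}
    (hστ : ∀ (h : List V) (u : V), u ∈ G.VE → 0 < τ h u (σ h u)) :
    LangPure G W σ ⊆ LangMixed G W τ := by
  rintro v ⟨hplay, hW, hσ⟩
  refine ⟨hplay, hW, fun i hi => ?_⟩
  simpa only [hσ i hi] using hστ (prefixList v i) (v i) hi

theorem notMem_LangPure_of_ne {V : Type*} {G : SGame V} {W : Set V} {σ : List V → V → V}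
    {v : ℕ → V} {i : ℕ} (hi : v i ∈ G.VE) (hne : σ (prefixList v i) (v i) ≠ v (i + 1)) :
    v ∉ LangPure G W σ :=
  fun hv => hne (hv.2.2 i hi)

theorem parameterizedExtract_more_permissive_general {V : Type*} [Fintype V]
    (G : SGame V) (P C : Set (V × V)) (Ls : Set (Set (V × V)))
    -- `T = (P, 𝑳, C)` is a strategy template:
    (hC : C ⊆ {e ∈ G.E | e.1 ∈ G.VE})
    (W : Set V) (α β : ℝ) (hα0 : 0 < α) (hβ : 1 ≤ β)
    (σt : List V → V → V)
    (hσt : ∀ (h : List V) (u : V), u ∈ G.VE → (u, σt h u) ∈ G.E \ (P ∪ C)) :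
    LangPure G W σt ⊆ LangMixed G W (sigmaHat G P C Ls α β) ∧
    ((∃ v ∈ LangMixed G W (sigmaHat G P C Ls α β), ∃ i, (v i, v (i + 1)) ∈ C) →
      LangPure G W σt ⊂ LangMixed G W (sigmaHat G P C Ls α β)) := by
  have hsub : LangPure G W σt ⊆ LangMixed G W (sigmaHat G P C Ls α β) :=
    LangPure_subset_LangMixed G W fun h u hu =>
      sigmaHat_pos G P C Ls hα0 (zero_lt_one.trans_le hβ) _
        ⟨(hσt h u hu).1, fun hP => (hσt h u hu).2 (Or.inl hP)⟩
  refine ⟨hsub, fun ⟨v, hv, i, hvC⟩ => Set.ssubset_iff_of_subset hsub |>.mpr ⟨v, hv, ?_⟩⟩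
  refine notMem_LangPure_of_ne (hC hvC).2 fun hσ => ?_
  exact (hσt _ _ (hC hvC).2).2 (Or.inr (hσ ▸ hvC))

/-- **Theorem 7**: (1) every pure strategy `σ̃` that always selects edges in
`E ∖ (P ∪ C)` is no more permissive than the mixed strategy `σ̂` of
`ParameterizedExtract`; (2) if moreover some play of `L_W(σ̂)` takes an edge of
`C`, then `σ̂` is strictly more permissive than `σ̃`. -/
theorem parameterizedExtract_more_permissive {V : Type*} [Fintype V]
    (G : SGame V) (P C : Set (V × V)) (Ls : Set (Set (V × V)))
    -- `T = (P, 𝑳, C)` is a strategy template: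
    (hP : P ⊆ {e ∈ G.E | e.1 ∈ G.VE}) (hC : C ⊆ {e ∈ G.E | e.1 ∈ G.VE})
    (hLs : ∀ L ∈ Ls, L ⊆ {e ∈ G.E | e.1 ∈ G.VE}) (hLsfin : Ls.Finite)
    (W : Set V) (α β : ℝ) (hα0 : 0 < α) (hα1 : α < 1) (hβ : 1 ≤ β)
    (σt : List V → V → V)
    (hσt : ∀ (h : List V) (u : V), u ∈ G.VE → (u, σt h u) ∈ G.E \ (P ∪ C)) :
    LangPure G W σt ⊆ LangMixed G W (sigmaHat G P C Ls α β) ∧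
    ((∃ v ∈ LangMixed G W (sigmaHat G P C Ls α β), ∃ i, (v i, v (i + 1)) ∈ C) →
      LangPure G W σt ⊂ LangMixed G W (sigmaHat G P C Ls α β)) :=
  parameterizedExtract_more_permissive_general G P C Ls hC W α β hα0 hβ σt hσt
end
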